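/- arXiv:2405.08583 — 3 statements merged into one kernel-verified Lean document; each statement's English description precedes it below -/
import Mathlib

section
/- Let n ≥ 2, let I ⊆ ℝ be a nondegenerate interval, and let f = (f_1,…,f_n) satisfy condition (⋆). The generalized quasi-arithmetic mean M_f is a quasi-arithmetic mean (i.e., equal to M_g for some g = (φ,…,φ) with φ : I → ℝ continuous and strictly monotone) if and only if there exist constants D_1,…,D_n ∈ ℝ such that f_k = f_1 + D_k for k = 1,…,n. -/
open Finset

/-- Condition (⋆): the functions are continuous, monotone in the same sense, and
not simultaneously constant on any nondegenerate subinterval of `I`. -/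
def CondStar {n : ℕ} (I : Set ℝ) (f : Fin n → ℝ → ℝ) : Prop :=
  (∀ k, ContinuousOn (f k) I) ∧
  ((∀ k, MonotoneOn (f k) I) ∨ (∀ k, AntitoneOn (f k) I)) ∧
  (∀ a b : ℝ, a ∈ I → b ∈ I → a < b →
    ∃ k, ∃ s ∈ Set.Icc a b, ∃ t ∈ Set.Icc a b, f k s ≠ f k t)

/-- `F = f₁ + ⋯ + fₙ`. -/
noncomputable def Fsum {n : ℕ} (f : Fin n → ℝ → ℝ) : ℝ → ℝ := fun t => ∑ k, f k t

/-- The generalized quasi-arithmetic mean `M_f(x) = F⁻¹(f₁(x₁) + ⋯ + fₙ(xₙ))`. -/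
noncomputable def Mf {n : ℕ} (I : Set ℝ) (f : Fin n → ℝ → ℝ) (x : Fin n → ℝ) : ℝ :=
  Function.invFunOn (Fsum f) I (∑ k, f k (x k))

/-- A mean `M` on `Iⁿ` is `σ`-balanced if for all `x ∈ Iⁿ`, with `u := M x`,
`M (M (u_{σ(1)}(x,u)), …, M (u_{σ(n)}(x,u))) = u`, where `u_k(x,t)` replaces the
`k`-th coordinate of `x` by `t`. -/
def SigmaBalanced {n : ℕ} (I : Set ℝ) (σ : Equiv.Perm (Fin n))
    (M : (Fin n → ℝ) → ℝ) : Prop :=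
  ∀ x : Fin n → ℝ, (∀ k, x k ∈ I) →
    M (fun k => M (Function.update x (σ k) (M x))) = M x

/-- `v_k(x) := M_f(u_k(x, M_f(x)))`. -/
noncomputable def vmap {n : ℕ} (I : Set ℝ) (f : Fin n → ℝ → ℝ) (k : Fin n)
    (x : Fin n → ℝ) : ℝ :=
  Mf I f (Function.update x k (Mf I f x))

/-!
Since `F (M_f x) = ∑ f_k (x_k)` and a quasi-arithmetic mean is symmetric, `M_f = M_φ` makes
`∑ f_k (x_k)` invariant under permutations of `x`; swapping the `1`st and `k`th coordinates of
`(a, …, a, t, a, …, a)` gives `f_k t - f_k a = f_1 t - f_1 a`. Conversely, if `f_k = f_1 + D_k`,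
the equations `F u = ∑ f_k (x_k)` and `n f_1 u = ∑ f_1 (x_k)` differ by the constant `∑ D_k`, and
`f_1` is strictly monotone by (⋆), so `M_f` and `M_{f_1}` pick the same `u`.
-/

open Function Set

lemma MonotoneOn.strictMonoOn_of_forall_exists_ne {α β : Type*} [LinearOrder α] [PartialOrder β]
    {g : α → β} {s : Set α} (hs : s.OrdConnected) (hg : MonotoneOn g s)
    (hne : ∀ a ∈ s, ∀ b ∈ s, a < b → ∃ x ∈ Icc a b, ∃ y ∈ Icc a b, g x ≠ g y) :
    StrictMonoOn g s := by
  intro a ha b hb hab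
  refine (hg ha hb hab.le).lt_of_ne fun hgab => ?_
  have hconst : ∀ z ∈ Icc a b, g z = g a := fun z hz =>
    le_antisymm (hgab ▸ hg (hs.out ha hb hz) hb hz.2) (hg ha (hs.out ha hb hz) hz.1)
  obtain ⟨x, hx, y, hy, hxy⟩ := hne a ha b hb hab
  exact hxy ((hconst x hx).trans (hconst y hy).symm)

lemma sum_apply_update {ι α M : Type*} [Fintype ι] [DecidableEq ι] [AddCommGroup M]
    (f : ι → α → M) (x : ι → α) (i : ι) (t : α) :
    ∑ j, f j (update x i t j) = ∑ j, f j (x j) + (f i t - f i (x i)) := by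
  simp_rw [apply_update f x i t]
  rw [sum_update_of_mem (mem_univ i), ← add_sum_erase _ _ (mem_univ i), sdiff_singleton_eq_erase]
  abel

lemma exists_eq_add_of_sum_comp_perm_eq {ι α M : Type*} [Fintype ι] [DecidableEq ι]
    [AddCommGroup M] {s : Set α} {f : ι → α → M}
    (hf : ∀ x : ι → α, (∀ k, x k ∈ s) → ∀ σ : Equiv.Perm ι, ∑ k, f k (x (σ k)) = ∑ k, f k (x k))
    (i : ι) : ∃ D : ι → M, ∀ k, ∀ t ∈ s, f k t = f i t + D k := by
  rcases s.eq_empty_or_nonempty with rfl | ⟨a, ha⟩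
  · exact ⟨0, by simp⟩
  refine ⟨fun k => f k a - f i a, fun k t ht => ?_⟩
  have hx : ∀ j, update (fun _ => a) k t j ∈ s := fun j => by
    rcases eq_or_ne j k with rfl | h <;> simp [*]
  have h := hf _ hx (Equiv.swap i k)
  have hswap : ∀ j, update (fun _ => a) k t (Equiv.swap i k j) = update (fun _ => a) i t j :=
    fun j => by rw [update_apply_equiv_apply, Equiv.symm_swap, Equiv.swap_apply_right]; rfl
  simp only [hswap, sum_apply_update] at h
  have h' := (add_left_cancel h).symm
  rw [sub_eq_sub_iff_add_eq_add] at h'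
  rw [add_sub_assoc', eq_sub_iff_add_eq, h']

variable {n : ℕ} {I : Set ℝ}

lemma exists_mem_fsum_eq_sum (hn : n ≠ 0) (hI : I.OrdConnected) {f : Fin n → ℝ → ℝ}
    (hc : ∀ k, ContinuousOn (f k) I)
    (hm : (∀ k, MonotoneOn (f k) I) ∨ (∀ k, AntitoneOn (f k) I))
    {x : Fin n → ℝ} (hx : ∀ k, x k ∈ I) : ∃ u ∈ I, Fsum f u = ∑ k, f k (x k) := by
  have : Nonempty (Fin n) := ⟨⟨0, Nat.pos_of_ne_zero hn⟩⟩
  obtain ⟨p, hp⟩ := Finite.exists_min x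
  obtain ⟨q, hq⟩ := Finite.exists_max x
  have hsub : uIcc (x p) (x q) ⊆ I := hI.uIcc_subset (hx p) (hx q)
  have hbetween : ∑ k, f k (x k) ∈ uIcc (Fsum f (x p)) (Fsum f (x q)) := by
    rcases hm with hm | hm
    · exact Icc_subset_uIcc ⟨sum_le_sum fun k _ => hm k (hx p) (hx k) (hp k),
        sum_le_sum fun k _ => hm k (hx k) (hx q) (hq k)⟩
    · exact Icc_subset_uIcc' ⟨sum_le_sum fun k _ => hm k (hx k) (hx q) (hq k),
        sum_le_sum fun k _ => hm k (hx p) (hx k) (hp k)⟩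
  obtain ⟨u, hu, hFu⟩ :=
    intermediate_value_uIcc ((continuousOn_finsetSum _ fun k _ => hc k).mono hsub) hbetween
  exact ⟨u, hsub hu, hFu⟩

lemma sum_eq_sum_of_Mf_eq (hn : n ≠ 0) (hI : I.OrdConnected) {f : Fin n → ℝ → ℝ}
    (hc : ∀ k, ContinuousOn (f k) I)
    (hm : (∀ k, MonotoneOn (f k) I) ∨ (∀ k, AntitoneOn (f k) I))
    {x y : Fin n → ℝ} (hx : ∀ k, x k ∈ I) (hy : ∀ k, y k ∈ I) (hxy : Mf I f x = Mf I f y) :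
    ∑ k, f k (x k) = ∑ k, f k (y k) := by
  rw [← (invFunOn_pos (exists_mem_fsum_eq_sum hn hI hc hm hx)).2,
    ← (invFunOn_pos (exists_mem_fsum_eq_sum hn hI hc hm hy)).2]
  exact congrArg (Fsum f) hxy

lemma Mf_const_comp_perm (φ : ℝ → ℝ) (σ : Equiv.Perm (Fin n)) (x : Fin n → ℝ) :
    Mf I (fun _ => φ) (x ∘ σ) = Mf I (fun _ => φ) x :=
  congrArg (invFunOn (Fsum fun _ => φ) I) (Equiv.sum_comp σ fun k => φ (x k))

lemma injOn_fsum_const (hn : n ≠ 0) {φ : ℝ → ℝ} (hφ : InjOn φ I) :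
    InjOn (Fsum fun _ : Fin n => φ) I := by
  intro s hs t ht hst
  simp only [Fsum, sum_const, card_univ, Fintype.card_fin, nsmul_eq_mul] at hst
  exact hφ hs ht (mul_left_cancel₀ (Nat.cast_ne_zero.2 hn) hst)

lemma Mf_eq_Mf_of_eq_add {f g : Fin n → ℝ → ℝ} {D : Fin n → ℝ}
    (hfg : ∀ k, ∀ t ∈ I, f k t = g k t + D k) (hg : InjOn (Fsum g) I)
    {x : Fin n → ℝ} (hx : ∀ k, x k ∈ I) (hex : ∃ u ∈ I, Fsum f u = ∑ k, f k (x k)) :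
    Mf I f x = Mf I g x := by
  obtain ⟨hmem, hFu⟩ : Mf I f x ∈ I ∧ Fsum f (Mf I f x) = ∑ k, f k (x k) := invFunOn_pos hex
  have hsum : ∀ y : Fin n → ℝ, (∀ k, y k ∈ I) → ∑ k, f k (y k) = ∑ k, g k (y k) + ∑ k, D k :=
    fun y hy => by
      rw [← sum_add_distrib]
      exact sum_congr rfl fun k _ => hfg k _ (hy k)
  have hGu : Fsum g (Mf I f x) = ∑ k, g k (x k) := by
    simp only [Fsum] at hFu ⊢
    linarith [hsum x hx, hsum (fun _ => Mf I f x) fun _ => hmem]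
  unfold Mf
  rw [← hGu]
  exact (hg.leftInvOn_invFunOn hmem).symm

lemma strictMonoOn_or_strictAntiOn_of_eq_add (hI : I.OrdConnected) {f : Fin n → ℝ → ℝ}
    (hf : CondStar I f) {i : Fin n} {D : Fin n → ℝ} (hD : ∀ k, ∀ t ∈ I, f k t = f i t + D k) :
    StrictMonoOn (f i) I ∨ StrictAntiOn (f i) I := by
  have hne : ∀ a ∈ I, ∀ b ∈ I, a < b → ∃ x ∈ Icc a b, ∃ y ∈ Icc a b, f i x ≠ f i y := by
    intro a ha b hb hab
    obtain ⟨k, x, hx, y, hy, hxy⟩ := hf.2.2 a b ha hb hab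
    refine ⟨x, hx, y, hy, fun h => hxy ?_⟩
    rw [hD k x (hI.out ha hb hx), hD k y (hI.out ha hb hy), h]
  rcases hf.2.1 with hm | hm
  · exact .inl ((hm i).strictMonoOn_of_forall_exists_ne hI hne)
  · exact .inr (strictMonoOn_toDual_comp_iff.1
      ((hm i).dual_right.strictMonoOn_of_forall_exists_ne hI hne))

/-- Lemma, Theorem D of [MatPal15]: `M_f` is a quasi-arithmetic mean iff
there are constants `D_k` with `f_k = f_1 + D_k` on `I`. -/
theorem stmt2 {n : ℕ} (hn : 2 ≤ n) (I : Set ℝ) (hI : I.OrdConnected)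
    (f : Fin n → ℝ → ℝ) (hf : CondStar I f) :
    (∃ φ : ℝ → ℝ, ContinuousOn φ I ∧ (StrictMonoOn φ I ∨ StrictAntiOn φ I) ∧
        ∀ x : Fin n → ℝ, (∀ k, x k ∈ I) →
          Mf I f x = Mf I (fun _ : Fin n => φ) x) ↔
      ∃ D : Fin n → ℝ, ∀ k, ∀ t ∈ I, f k t = f ⟨0, by omega⟩ t + D k := by
  have hn0 : n ≠ 0 := by omega
  constructor
  · rintro ⟨φ, -, -, hφ⟩
    refine exists_eq_add_of_sum_comp_perm_eq (fun x hx σ => ?_) _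
    refine sum_eq_sum_of_Mf_eq hn0 hI hf.1 hf.2.1 (fun k => hx (σ k)) hx ?_
    rw [hφ _ (fun k => hx (σ k)), hφ x hx]
    exact Mf_const_comp_perm φ σ x
  · rintro ⟨D, hD⟩
    have hφ := strictMonoOn_or_strictAntiOn_of_eq_add hI hf hD
    refine ⟨_, hf.1 _, hφ, fun x hx => Mf_eq_Mf_of_eq_add hD ?_ hx
      (exists_mem_fsum_eq_sum hn0 hI hf.1 hf.2.1 hx)⟩
    exact injOn_fsum_const hn0 (hφ.elim StrictMonoOn.injOn StrictAntiOn.injOn)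
end

section
/- Let I ⊆ ℝ be a nondegenerate interval and t ∈ [0,1], and define the symmetric mean M : I² → ℝ by M(x,y) := t·min(x,y) + (1−t)·max(x,y). Then M is balanced, i.e., M(M(x,M(x,y)),M(M(x,y),y)) = M(x,y) for all (x,y) ∈ I², if and only if t ∈ {0, 1/2, 1}. -/
open Finset

/-- The mean `M(x,y) = t·min(x,y) + (1−t)·max(x,y)`. -/
noncomputable def tmm (t x y : ℝ) : ℝ := t * min x y + (1 - t) * max x y

/-! On an ordered pair `x ≤ y` the mean is the affine map `x + (1 - t) (y - x)`, and since it
stays in `[x, y]` every inner application of Aumann's equation is affine as well. Writing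
`d = |y - x|`, the left side of the equation exceeds `M(x, y)` by exactly `t (1 - t) (1 - 2t) d`,
which vanishes on a pair with `d ≠ 0` iff `t ∈ {0, 1/2, 1}`. -/

section

variable {t : ℝ}

theorem mul_one_sub_mul_one_sub_two_mul_eq_zero_iff :
    t * (1 - t) * (1 - 2 * t) = 0 ↔ t = 0 ∨ t = 1 / 2 ∨ t = 1 := by
  simp only [mul_eq_zero, sub_eq_zero]
  constructor
  · rintro ((h | h) | h) <;> [left; (right; right); (right; left)] <;> linarith
  · rintro (h | h | h) <;> subst h <;> norm_num

theorem tmm_comm (x y : ℝ) : tmm t x y = tmm t y x := by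
  simp only [tmm, min_comm, max_comm]

theorem tmm_of_le {x y : ℝ} (h : x ≤ y) : tmm t x y = t * x + (1 - t) * y := by
  simp only [tmm, min_eq_left h, max_eq_right h]

theorem tmm_left_le (ht : t ∈ Set.Icc (0 : ℝ) 1) {x y : ℝ} (h : x ≤ y) : x ≤ tmm t x y := by
  rw [tmm_of_le h]; nlinarith [ht.1, ht.2]

theorem tmm_le_right (ht : t ∈ Set.Icc (0 : ℝ) 1) {x y : ℝ} (h : x ≤ y) : tmm t x y ≤ y := by
  rw [tmm_of_le h]; nlinarith [ht.1, ht.2]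

theorem tmm_aumann_sub_of_le (ht : t ∈ Set.Icc (0 : ℝ) 1) {x y : ℝ} (h : x ≤ y) :
    tmm t (tmm t x (tmm t x y)) (tmm t (tmm t x y) y) - tmm t x y =
      t * (1 - t) * (1 - 2 * t) * (y - x) := by
  have hxm := tmm_left_le ht h
  have hmy := tmm_le_right ht h
  have huv : tmm t x (tmm t x y) ≤ tmm t (tmm t x y) y :=
    (tmm_le_right ht hxm).trans (tmm_left_le ht hmy)
  rw [tmm_of_le huv, tmm_of_le hxm, tmm_of_le hmy, tmm_of_le h]
  ring

theorem tmm_aumann_sub (ht : t ∈ Set.Icc (0 : ℝ) 1) (x y : ℝ) :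
    tmm t (tmm t x (tmm t x y)) (tmm t (tmm t x y) y) - tmm t x y =
      t * (1 - t) * (1 - 2 * t) * |y - x| := by
  rcases le_total x y with h | h
  · rw [abs_of_nonneg (sub_nonneg.2 h), tmm_aumann_sub_of_le ht h]
  · rw [abs_sub_comm, abs_of_nonneg (sub_nonneg.2 h), ← tmm_aumann_sub_of_le ht h,
      tmm_comm x y, tmm_comm x (tmm t y x), tmm_comm (tmm t y x) y,
      tmm_comm (tmm t (tmm t y x) x)]

end

theorem stmt6_general (I : Set ℝ) (hne : ∃ a ∈ I, ∃ b ∈ I, a < b)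
    (t : ℝ) (ht : t ∈ Set.Icc (0 : ℝ) 1) :
    (∀ x ∈ I, ∀ y ∈ I,
        tmm t (tmm t x (tmm t x y)) (tmm t (tmm t x y) y) = tmm t x y) ↔
      t = 0 ∨ t = 1 / 2 ∨ t = 1 := by
  simp only [← sub_eq_zero (b := tmm t _ _), tmm_aumann_sub ht]
  rw [← mul_one_sub_mul_one_sub_two_mul_eq_zero_iff]
  constructor
  · obtain ⟨a, ha, b, hb, hab⟩ := hne
    intro h
    have hd : |b - a| ≠ 0 := abs_ne_zero.2 (sub_ne_zero.2 hab.ne')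
    exact (mul_eq_zero.1 (h a ha b hb)).resolve_right hd
  · intro h x _ y _
    rw [h, zero_mul]

/-- `M(x,y) = t·min(x,y)+(1−t)·max(x,y)` is balanced (satisfies Aumann's
equation) on `I²` iff `t ∈ {0, 1/2, 1}`. -/
theorem stmt6 (I : Set ℝ) (hI : I.OrdConnected) (hne : ∃ a ∈ I, ∃ b ∈ I, a < b)
    (t : ℝ) (ht : t ∈ Set.Icc (0 : ℝ) 1) :
    (∀ x ∈ I, ∀ y ∈ I,
        tmm t (tmm t x (tmm t x y)) (tmm t (tmm t x y) y) = tmm t x y) ↔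
      t = 0 ∨ t = 1 / 2 ∨ t = 1 :=
  stmt6_general I hne t ht
end

section
/- Let n ≥ 2, let I ⊆ ℝ be a nondegenerate interval, and let f = (f_1,…,f_n) satisfy condition (⋆). For every (d_1,…,d_n) ∈ F(I)ⁿ, the system of equations d_k = y_1 + … + y_{k−1} + z_k(y) + y_{k+1} + … + y_n (k = 1,…,n), in unknowns y_k ∈ f_k(I) where z_k(y) := f_k(F^{-1}(y_1+…+y_n)), has at most one solution, namely y_k = α_k := (1/(n−1)) ( (n−2)(g_k(d̄) − d_k) + Σ_{j≠k} (d_j − g_j(d̄)) ) with g_j := f_j ∘ F^{-1} and d̄ := (d_1+…+d_n)/n; moreover, if α_k ∈ f_k(I) for all k = 1,…,n, then (α_1,…,α_n) is indeed a solution of the system. -/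
/-
Write `g_k := f_k ∘ F⁻¹`, so that `∑ₖ g_k(s) = s` for every `s ∈ F(I)`. If `y` solves the system
and `S := ∑ₖ yₖ`, the `k`-th equation reads `d_k = S − y_k + g_k(S)`. Because all `f_k` are
monotone in the same sense, `S = ∑ₖ f_k(x_k)` lies between `F(min x)` and `F(max x)`, hence in
`F(I)`; summing the equations then gives `∑ₖ d_k = n S`, i.e. `S = d̄`, and so
`y_k = d̄ − d_k + g_k(d̄)`, which is `α_k`. Conversely, `d̄ ∈ F(I)` since `F(I)` is an interval,
and the same computation read backwards shows that `α` solves the system.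
-/

open Finset

/-- `α_k = (1/(n−1)) ( (n−2)(g_k(d̄) − d_k) + ∑_{j≠k} (d_j − g_j(d̄)) )`, where
`g_j := f_j ∘ F⁻¹` and `d̄ := (d_1+⋯+d_n)/n`. -/
noncomputable def alpha {n : ℕ} (I : Set ℝ) (f : Fin n → ℝ → ℝ) (d : Fin n → ℝ)
    (k : Fin n) : ℝ :=
  (1 / ((n : ℝ) - 1)) *
    (((n : ℝ) - 2) * (f k (Function.invFunOn (Fsum f) I ((∑ j, d j) / n)) - d k) +
      ∑ j ∈ Finset.univ.erase k,
        (d j - f j (Function.invFunOn (Fsum f) I ((∑ i, d i) / n))))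

section System

variable {ι : Type*} [Fintype ι] [DecidableEq ι]

def SolvesSystem (g : ι → ℝ → ℝ) (d y : ι → ℝ) : Prop :=
  ∀ k, d k = (∑ j ∈ univ.erase k, y j) + g k (∑ j, y j)

variable {g : ι → ℝ → ℝ} {d y : ι → ℝ}

theorem SolvesSystem.apply_eq (hy : SolvesSystem g d y) (k : ι) :
    d k = (∑ j, y j) - y k + g k (∑ j, y j) := by
  rw [hy k, sum_erase_eq_sub (mem_univ k)]

theorem SolvesSystem.sum_eq (hy : SolvesSystem g d y) (hg : ∑ k, g k (∑ j, y j) = ∑ j, y j) :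
    ∑ k, d k = Fintype.card ι * ∑ j, y j := by
  simp only [hy.apply_eq, sum_add_distrib, sum_sub_distrib, hg, sum_const, card_univ,
    nsmul_eq_mul]
  ring

theorem SolvesSystem.eq_of_sum [Nonempty ι] (hy : SolvesSystem g d y)
    (hg : ∑ k, g k (∑ j, y j) = ∑ j, y j) :
    y = fun k => (∑ j, d j) / Fintype.card ι - d k + g k ((∑ j, d j) / Fintype.card ι) := by
  have hmean : (∑ j, d j) / Fintype.card ι = ∑ j, y j := by
    rw [hy.sum_eq hg, mul_div_cancel_left₀ _ (Nat.cast_ne_zero.mpr Fintype.card_ne_zero)]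
  ext k
  rw [hmean, hy.apply_eq k]
  ring

theorem solvesSystem_of_sum [Nonempty ι]
    (hg : ∑ k, g k ((∑ j, d j) / Fintype.card ι) = (∑ j, d j) / Fintype.card ι) :
    SolvesSystem g d
      (fun k => (∑ j, d j) / Fintype.card ι - d k + g k ((∑ j, d j) / Fintype.card ι)) := by
  set m := (∑ j, d j) / Fintype.card ι with hm
  have hsum : ∑ j, (m - d j + g j m) = m := by
    rw [sum_add_distrib, sum_sub_distrib, hg, sum_const, card_univ, nsmul_eq_mul, hm,
      mul_div_cancel₀ _ (Nat.cast_ne_zero.mpr Fintype.card_ne_zero)]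
    ring
  intro k
  rw [sum_erase_eq_sub (mem_univ k), hsum]
  ring

end System

theorem Set.OrdConnected.sum_div_card_mem {ι : Type*} [Fintype ι] [Nonempty ι] {s : Set ℝ}
    (hs : s.OrdConnected) {d : ι → ℝ} (hd : ∀ i, d i ∈ s) :
    (∑ i, d i) / Fintype.card ι ∈ s := by
  have hcard : (0 : ℝ) < Fintype.card ι := Nat.cast_pos.mpr Fintype.card_pos
  convert hs.convex.sum_mem (t := Finset.univ) (w := fun _ => (Fintype.card ι : ℝ)⁻¹)
    (fun _ _ => by positivity) (by simp [hcard.ne']) (fun i _ => hd i) using 1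
  simp [← mul_sum, div_eq_inv_mul]

section Fsum

variable {n : ℕ} {I : Set ℝ} {f : Fin n → ℝ → ℝ}

theorem sum_apply_invFunOn_Fsum {s : ℝ} (hs : s ∈ Fsum f '' I) :
    ∑ k, f k (Function.invFunOn (Fsum f) I s) = s :=
  Function.invFunOn_eq (f := Fsum f) hs

theorem ordConnected_image_Fsum (hI : I.OrdConnected) (hf : ∀ k, ContinuousOn (f k) I) :
    (Fsum f '' I).OrdConnected :=
  (hI.isPreconnected.image _ (continuousOn_finsetSum univ fun k _ => hf k)).ordConnected

theorem sum_apply_mem_image_Fsum_of_le (hFI : (Fsum f '' I).OrdConnected) {a b : ℝ}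
    (ha : a ∈ I) (hb : b ∈ I) {x : Fin n → ℝ} (hlo : ∀ k, f k a ≤ f k (x k))
    (hhi : ∀ k, f k (x k) ≤ f k b) :
    ∑ k, f k (x k) ∈ Fsum f '' I :=
  hFI.out ⟨a, ha, rfl⟩ ⟨b, hb, rfl⟩
    ⟨sum_le_sum fun k _ => hlo k, sum_le_sum fun k _ => hhi k⟩

theorem sum_apply_mem_image_Fsum [NeZero n] (hFI : (Fsum f '' I).OrdConnected)
    (hmono : (∀ k, MonotoneOn (f k) I) ∨ (∀ k, AntitoneOn (f k) I))
    {x : Fin n → ℝ} (hx : ∀ k, x k ∈ I) :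
    ∑ k, f k (x k) ∈ Fsum f '' I := by
  obtain ⟨i, hi⟩ := Finite.exists_min x
  obtain ⟨j, hj⟩ := Finite.exists_max x
  rcases hmono with hmono | hanti
  · exact sum_apply_mem_image_Fsum_of_le hFI (hx i) (hx j)
      (fun k => hmono k (hx i) (hx k) (hi k)) (fun k => hmono k (hx k) (hx j) (hj k))
  · exact sum_apply_mem_image_Fsum_of_le hFI (hx j) (hx i)
      (fun k => hanti k (hx k) (hx j) (hj k)) (fun k => hanti k (hx i) (hx k) (hi k))

theorem alpha_eq_of_sum (hn : 2 ≤ n) {d : Fin n → ℝ}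
    (h : ∑ k, f k (Function.invFunOn (Fsum f) I ((∑ j, d j) / n)) = (∑ j, d j) / n) :
    alpha I f d = fun k =>
      (∑ j, d j) / n - d k + f k (Function.invFunOn (Fsum f) I ((∑ j, d j) / n)) := by
  have hn0 : (n : ℝ) ≠ 0 := by positivity
  have hn1 : (n : ℝ) - 1 ≠ 0 := by
    have : (2 : ℝ) ≤ n := by exact_mod_cast hn
    linarith
  ext k
  unfold alpha
  rw [sum_sub_distrib, sum_erase_eq_sub (mem_univ k), sum_erase_eq_sub (mem_univ k), h]
  field_simp
  ring

end Fsum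

theorem stmt8_general {n : ℕ} (hn : 2 ≤ n) (I : Set ℝ) (hI : I.OrdConnected)
    (f : Fin n → ℝ → ℝ) (hf : CondStar I f)
    (d : Fin n → ℝ) (hd : ∀ k, d k ∈ Fsum f '' I) :
    (∀ y : Fin n → ℝ, (∀ k, y k ∈ f k '' I) →
        (∀ k, d k = (∑ j ∈ Finset.univ.erase k, y j) +
          f k (Function.invFunOn (Fsum f) I (∑ j, y j))) →
        y = alpha I f d) ∧
    ((∀ k, alpha I f d k ∈ f k '' I) →
      ∀ k, d k = (∑ j ∈ Finset.univ.erase k, alpha I f d j) +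
        f k (Function.invFunOn (Fsum f) I (∑ j, alpha I f d j))) := by
  have : NeZero n := ⟨by omega⟩
  have hFI := ordConnected_image_Fsum hI hf.1
  have hmean : (∑ j, d j) / n ∈ Fsum f '' I := by
    simpa using hFI.sum_div_card_mem hd
  have hα := alpha_eq_of_sum hn (sum_apply_invFunOn_Fsum hmean)
  refine ⟨fun y hy hsys => ?_, fun _ => ?_⟩
  · choose x hxI hxy using hy
    have hS : ∑ j, y j ∈ Fsum f '' I := by
      simpa only [hxy] using sum_apply_mem_image_Fsum hFI hf.2.1 hxI
    simpa [hα] using SolvesSystem.eq_of_sum (g := fun k s => f k (Function.invFunOn (Fsum f) I s))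
      hsys (sum_apply_invFunOn_Fsum hS)
  · have hsol := solvesSystem_of_sum (g := fun k s => f k (Function.invFunOn (Fsum f) I s))
      (d := d) (by simpa using sum_apply_invFunOn_Fsum hmean)
    simp only [Fintype.card_fin] at hsol
    rw [hα]
    exact hsol

/-- for `d ∈ F(I)ⁿ`, the system `d_k = ∑_{j≠k} y_j + z_k(y)` with
`z_k(y) = f_k(F⁻¹(y_1+⋯+y_n))` and unknowns `y_k ∈ f_k(I)` has at most one solution,
namely `y = α`; and if `α_k ∈ f_k(I)` for all `k`, then `α` is indeed a solution. -/
theorem stmt8 {n : ℕ} (hn : 2 ≤ n) (I : Set ℝ) (hI : I.OrdConnected)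
    (hne : ∃ a ∈ I, ∃ b ∈ I, a < b)
    (f : Fin n → ℝ → ℝ) (hf : CondStar I f)
    (d : Fin n → ℝ) (hd : ∀ k, d k ∈ Fsum f '' I) :
    (∀ y : Fin n → ℝ, (∀ k, y k ∈ f k '' I) →
        (∀ k, d k = (∑ j ∈ Finset.univ.erase k, y j) +
          f k (Function.invFunOn (Fsum f) I (∑ j, y j))) →
        y = alpha I f d) ∧
    ((∀ k, alpha I f d k ∈ f k '' I) →
      ∀ k, d k = (∑ j ∈ Finset.univ.erase k, alpha I f d j) +
        f k (Function.invFunOn (Fsum f) I (∑ j, alpha I f d j))) :=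
  stmt8_general hn I hI f hf d hd
end
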